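/- For $x > 0$, the function $g(x) = x \cdot \operatorname{arth}(1/\sqrt{1+x^2})$ satisfies $g(x) < 1$, where $\operatorname{arth}(t) = \frac{1}{2}\log\frac{1+t}{1-t}$ for $0 \leq t < 1$. -/

import Mathlib

/-! `arth` agrees with `Real.artanh` on `[-1, 1]`, and `sinh (artanh (1 / √(1 + x²))) = 1 / x`.
Hence with `y = artanh (1 / √(1 + x²)) > 0` the claim reads `y < sinh y`. -/

/-- The inverse hyperbolic tangent, `arth t = (1/2) log ((1+t)/(1-t))`. -/
noncomputable def arth (t : ℝ) : ℝ := Real.log ((1 + t) / (1 - t)) / 2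

open Real Set

theorem arth_eq_artanh {t : ℝ} (ht : t ∈ Icc (-1) 1) : arth t = artanh t := by
  rw [arth, artanh_eq_half_log ht]
  ring

theorem one_div_sqrt_one_add_sq_mem_Ioo {x : ℝ} (hx : x ≠ 0) :
    1 / √(1 + x ^ 2) ∈ Ioo 0 1 := by
  have hlt : 1 < √(1 + x ^ 2) := by
    rw [lt_sqrt zero_le_one]
    linarith [pow_pos (abs_pos.mpr hx) 2, sq_abs x]
  exact ⟨by positivity, (div_lt_one (by linarith)).mpr hlt⟩

theorem sinh_artanh_one_div_sqrt_one_add_sq {x : ℝ} (hx : 0 < x) :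
    sinh (artanh (1 / √(1 + x ^ 2))) = 1 / x := by
  have hmem := one_div_sqrt_one_add_sq_mem_Ioo hx.ne'
  have hpos : (0 : ℝ) < 1 + x ^ 2 := by positivity
  have hsq : 1 - (1 / √(1 + x ^ 2)) ^ 2 = (x / √(1 + x ^ 2)) ^ 2 := by
    field_simp
    rw [sq_sqrt hpos.le]
    ring
  rw [sinh_artanh (Ioo_subset_Ioo_left (by norm_num) hmem), hsq,
    sqrt_sq (by positivity)]
  field_simp

theorem stmt_3 (x : ℝ) (hx : 0 < x) :
    x * arth (1 / Real.sqrt (1 + x ^ 2)) < 1 := by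
  have hmem := one_div_sqrt_one_add_sq_mem_Ioo hx.ne'
  rw [arth_eq_artanh (Ioo_subset_Icc_self (Ioo_subset_Ioo_left (by norm_num) hmem))]
  calc x * artanh (1 / √(1 + x ^ 2))
      < x * sinh (artanh (1 / √(1 + x ^ 2))) :=
        mul_lt_mul_of_pos_left (self_lt_sinh_iff.mpr (artanh_pos hmem)) hx
    _ = 1 := by rw [sinh_artanh_one_div_sqrt_one_add_sq hx]; field_simp
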